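/- Let Θ = [−1,1]² ⊂ ℝ², g₁(θ) = θ₂³ − θ₁, g₂(θ) = θ₂³ + θ₁, g₃(θ) = θ₂ (three inequality constraints, no equalities), Θ_I = {θ ∈ Θ : g_j(θ) ≤ 0, j = 1,2,3}, and p = (0,1). Then: (a) S(p,Θ_I) = {(0,0)}; (b) T((0,0)) = L((0,0)) = {(0,s) : s ≤ 0}; (c) Assumption 3' holds at (0,0), i.e., there exist η > 0 and C > 0 such that Q(θ) ≥ C·d(θ,Θ_I) for all θ ∈ Θ with ‖θ‖ ≤ η, where d(θ,Θ_I) = inf{‖θ−a‖ : a ∈ Θ_I}; and (d) MFCQ fails at (0,0), i.e., there is no t ∈ ℝ² with ∇g_j((0,0))·t < 0 for all j ∈ J*((0,0)) = {1,2,3}. -/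

import Mathlib

open Filter Topology Metric RealInnerProductSpace

noncomputable section

/-- Two-dimensional Euclidean parameter space. -/
abbrev E2 := EuclideanSpace ℝ (Fin 2)

/-- The parameter space `Θ = [-1,1]²`. -/
def Box : Set E2 := {θ | θ 0 ∈ Set.Icc (-1:ℝ) 1 ∧ θ 1 ∈ Set.Icc (-1:ℝ) 1}

/-- The direction of projection `p = (0,1)`. -/
def pvec : E2 := EuclideanSpace.single 1 1

/-- The support set `S(p, Θ_I)`: maximizers of `θ ↦ ⟪p, θ⟫` over `Θ_I`. -/
def suppSet (ΘI : Set E2) (p : E2) : Set E2 :=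
  {θ ∈ ΘI | ∀ θ' ∈ ΘI, ⟪p, θ'⟫ ≤ ⟪p, θ⟫}

/-- The tangent cone `T(θ*)` to `Θ_I` at `θ*`. -/
def tcone (ΘI : Set E2) (θs : E2) : Set E2 :=
  insert 0 {t | ∃ u : ℕ → E2,
    (∀ n, u n ∈ ΘI ∧ u n ≠ θs) ∧ Tendsto u atTop (𝓝 θs) ∧
    Tendsto (fun n => ‖u n - θs‖⁻¹ • (u n - θs)) atTop (𝓝 (‖t‖⁻¹ • t))}

/-- The linearized cone `L(θ*)` (all constraints are inequality constraints). -/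
def lcone {J : ℕ} (g : Fin J → E2 → ℝ) (θs : E2) : Set E2 :=
  {t | ∀ j, g j θs = 0 → ⟪gradient (g j) θs, t⟫ ≤ 0}

/-- The criterion `Q(θ) = max{0, max_j g_j(θ)}` (all constraints are inequalities). -/
def Qcrit {J : ℕ} (g : Fin J → E2 → ℝ) (θ : E2) : ℝ :=
  max 0 (⨆ j, g j θ)

/-- The three constraints `g₁(θ) = θ₂³ - θ₁`, `g₂(θ) = θ₂³ + θ₁`, `g₃(θ) = θ₂`. -/
def gEx15 : Fin 3 → E2 → ℝ :=
  ![fun θ => (θ 1) ^ 3 - θ 0, fun θ => (θ 1) ^ 3 + θ 0, fun θ => θ 1]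

/-- The identified set of the second counterexample. -/
def idSetEx15 : Set E2 := {θ ∈ Box | ∀ j, gEx15 j θ ≤ 0}


/-! ### Auxiliary lemmas -/

lemma E2ext {x y : E2} (h0 : x 0 = y 0) (h1 : x 1 = y 1) : x = y :=
  PiLp.ext (Fin.forall_fin_two.mpr ⟨h0, h1⟩)

lemma E2norm (x : E2) : ‖x‖ = Real.sqrt ((x 0)^2 + (x 1)^2) := by
  rw [EuclideanSpace.norm_eq, Fin.sum_univ_two]
  simp [Real.norm_eq_abs, sq_abs]

lemma E2norm_le (x : E2) : ‖x‖ ≤ |x 0| + |x 1| := by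
  rw [E2norm]
  have h : (x 0)^2 + (x 1)^2 ≤ (|x 0| + |x 1|)^2 := by
    have := abs_nonneg (x 0); have := abs_nonneg (x 1)
    nlinarith [sq_abs (x 0), sq_abs (x 1)]
  calc Real.sqrt ((x 0)^2 + (x 1)^2) ≤ Real.sqrt ((|x 0| + |x 1|)^2) := Real.sqrt_le_sqrt h
    _ = |x 0| + |x 1| := Real.sqrt_sq (by positivity)

lemma E2abs_le_norm (x : E2) (i : Fin 2) : |x i| ≤ ‖x‖ := by
  have h : ∀ j : Fin 2, |x j| ≤ ‖x‖ := by
    rw [Fin.forall_fin_two]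
    constructor <;>
      (rw [E2norm, ← Real.sqrt_sq_eq_abs];
       exact Real.sqrt_le_sqrt (by nlinarith [sq_nonneg (x 0), sq_nonneg (x 1)]))
  exact h i

lemma inner_gradient_eq (f : E2 → ℝ) (L : E2 →L[ℝ] ℝ) (x t : E2) (h : HasFDerivAt f L x) :
    ⟪gradient f x, t⟫ = L t := by
  rw [gradient, h.fderiv, InnerProductSpace.toDual_symm_apply]

lemma cube_fderiv (s : ℝ) :
    HasDerivAt (fun y : ℝ => y ^ 3) (3 * s ^ 2) s := by simpa using hasDerivAt_pow 3 s

lemma grad0 (t : E2) : ⟪gradient (gEx15 0) 0, t⟫ = -(t 0) := by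
  have hc := (cube_fderiv ((EuclideanSpace.proj (1:Fin 2) : E2 →L[ℝ] ℝ) (0:E2)))
  have h1 := (hc.comp_hasFDerivAt (0:E2)
    ((EuclideanSpace.proj (1:Fin 2) : E2 →L[ℝ] ℝ).hasFDerivAt)).sub
    ((EuclideanSpace.proj (0:Fin 2) : E2 →L[ℝ] ℝ).hasFDerivAt)
  have h2 : HasFDerivAt (gEx15 0)
      ((3 * (EuclideanSpace.proj (1:Fin 2) : E2 →L[ℝ] ℝ) (0:E2) ^ 2) •
        (EuclideanSpace.proj (1:Fin 2) : E2 →L[ℝ] ℝ) - EuclideanSpace.proj 0) 0 := h1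
  rw [inner_gradient_eq _ _ _ t h2]
  simp

lemma grad1 (t : E2) : ⟪gradient (gEx15 1) 0, t⟫ = t 0 := by
  have hc := (cube_fderiv ((EuclideanSpace.proj (1:Fin 2) : E2 →L[ℝ] ℝ) (0:E2)))
  have h1 := (hc.comp_hasFDerivAt (0:E2)
    ((EuclideanSpace.proj (1:Fin 2) : E2 →L[ℝ] ℝ).hasFDerivAt)).add
    ((EuclideanSpace.proj (0:Fin 2) : E2 →L[ℝ] ℝ).hasFDerivAt)
  have h2 : HasFDerivAt (gEx15 1)
      ((3 * (EuclideanSpace.proj (1:Fin 2) : E2 →L[ℝ] ℝ) (0:E2) ^ 2) •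
        (EuclideanSpace.proj (1:Fin 2) : E2 →L[ℝ] ℝ) + EuclideanSpace.proj 0) 0 := h1
  rw [inner_gradient_eq _ _ _ t h2]
  simp

lemma grad2 (t : E2) : ⟪gradient (gEx15 2) 0, t⟫ = t 1 := by
  have h2 : HasFDerivAt (gEx15 2) (EuclideanSpace.proj (1:Fin 2) : E2 →L[ℝ] ℝ) 0 :=
    (EuclideanSpace.proj (1:Fin 2) : E2 →L[ℝ] ℝ).hasFDerivAt
  rw [inner_gradient_eq _ _ _ t h2]
  simp

lemma mem_idSet {θ : E2} : θ ∈ idSetEx15 ↔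
    (-1 ≤ θ 0 ∧ θ 0 ≤ 1) ∧ (-1 ≤ θ 1 ∧ θ 1 ≤ 1) ∧
    (θ 1)^3 - θ 0 ≤ 0 ∧ (θ 1)^3 + θ 0 ≤ 0 ∧ θ 1 ≤ 0 := by
  constructor
  · rintro ⟨⟨h0, h1⟩, hg⟩
    exact ⟨⟨h0.1, h0.2⟩, ⟨h1.1, h1.2⟩, hg 0, hg 1, hg 2⟩
  · rintro ⟨h0, h1, ha, hb, hc⟩
    refine ⟨⟨⟨h0.1, h0.2⟩, ⟨h1.1, h1.2⟩⟩, ?_⟩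
    intro j
    fin_cases j <;> simp [gEx15] <;> linarith

lemma zero_mem_idSet : (0 : E2) ∈ idSetEx15 := by
  rw [mem_idSet]; norm_num

lemma inner_pvec (x : E2) : ⟪pvec, x⟫ = x 1 := by
  simp [pvec, EuclideanSpace.inner_single_left]

lemma Qcrit_nonneg (θ : E2) : 0 ≤ Qcrit gEx15 θ := le_max_left _ _

lemma Qcrit_ge (θ : E2) (j : Fin 3) : gEx15 j θ ≤ Qcrit gEx15 θ :=
  le_trans (le_ciSup (Set.Finite.bddAbove (Set.finite_range fun j => gEx15 j θ)) j)
    (le_max_right _ _)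

lemma gEx15_zero : ∀ j : Fin 3, gEx15 j 0 = 0 := by
  intro j
  have h0 : (0:E2) 0 = 0 := rfl
  have h1 : (0:E2) 1 = 0 := rfl
  fin_cases j
  · show (0:E2) 1 ^ 3 - (0:E2) 0 = 0; rw [h0, h1]; norm_num
  · show (0:E2) 1 ^ 3 + (0:E2) 0 = 0; rw [h0, h1]; norm_num
  · show (0:E2) 1 = 0; exact h1

lemma suppSet_eq : suppSet idSetEx15 pvec = {0} := by
  ext θ
  simp only [suppSet, Set.mem_setOf_eq, Set.mem_singleton_iff]
  constructor
  · rintro ⟨hθ, hmax⟩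
    have h1le : θ 1 ≤ 0 := (mem_idSet.mp hθ).2.2.2.2
    have h1ge : 0 ≤ θ 1 := by
      have := hmax 0 zero_mem_idSet
      rw [inner_pvec, inner_pvec] at this
      simpa using this
    have h1 : θ 1 = 0 := le_antisymm h1le h1ge
    obtain ⟨_, _, ha, hb, _⟩ := mem_idSet.mp hθ
    rw [h1] at ha hb
    have h0 : θ 0 = 0 := by norm_num at ha hb; linarith
    exact E2ext h0 h1
  · rintro rfl
    refine ⟨zero_mem_idSet, fun θ' hθ' => ?_⟩
    rw [inner_pvec, inner_pvec]
    have := (mem_idSet.mp hθ').2.2.2.2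
    simpa using this

lemma lcone_eq : lcone gEx15 0 = {t : E2 | t 0 = 0 ∧ t 1 ≤ 0} := by
  ext t
  simp only [lcone, Set.mem_setOf_eq]
  constructor
  · intro h
    have h0 := h 0 (gEx15_zero 0); rw [grad0] at h0
    have h1 := h 1 (gEx15_zero 1); rw [grad1] at h1
    have h2 := h 2 (gEx15_zero 2); rw [grad2] at h2
    exact ⟨le_antisymm h1 (by linarith), h2⟩
  · rintro ⟨ht0, ht1⟩ j _
    fin_cases j
    · show ⟪gradient (gEx15 0) 0, t⟫ ≤ 0; rw [grad0, ht0]; norm_num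
    · show ⟪gradient (gEx15 1) 0, t⟫ ≤ 0; rw [grad1, ht0]
    · show ⟪gradient (gEx15 2) 0, t⟫ ≤ 0; rw [grad2]; exact ht1

lemma mfcq_fails : ¬ (∃ t : E2, ∀ j : Fin 3, ⟪gradient (gEx15 j) 0, t⟫ < 0) := by
  rintro ⟨t, ht⟩
  have h0 := ht 0; rw [grad0] at h0
  have h1 := ht 1; rw [grad1] at h1
  linarith

lemma assumption3' : ∀ θ ∈ Box, ‖θ‖ ≤ (1:ℝ) →
    Qcrit gEx15 θ ≥ (1/2 : ℝ) * infDist θ idSetEx15 := by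
  intro θ hθ _
  obtain ⟨⟨h00, h01⟩, h10, h11⟩ : ((-1:ℝ) ≤ θ 0 ∧ θ 0 ≤ 1) ∧ (-1:ℝ) ≤ θ 1 ∧ θ 1 ≤ 1 :=
    ⟨⟨hθ.1.1, hθ.1.2⟩, hθ.2.1, hθ.2.2⟩
  set q := Qcrit gEx15 θ with hq
  have hq0 : 0 ≤ q := Qcrit_nonneg θ
  have hg1 : (θ 1)^3 - θ 0 ≤ q := Qcrit_ge θ 0
  have hg2 : (θ 1)^3 + θ 0 ≤ q := Qcrit_ge θ 1
  have hg3 : θ 1 ≤ q := Qcrit_ge θ 2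
  set s : ℝ := min (θ 1) 0 with hs
  set b : ℝ := max (s^3) (min (θ 0) (-s^3)) with hb
  have hs0 : s ≤ 0 := min_le_right _ _
  have hs1 : -1 ≤ s := le_min h10 (by norm_num)
  have hsθ : s ≤ θ 1 := min_le_left _ _
  have hcube : s^3 ≤ (θ 1)^3 := by nlinarith [sq_nonneg (s + θ 1), sq_nonneg (s - θ 1)]
  have hsc : s^3 ≤ 0 := Odd.pow_nonpos (by decide) hs0
  have hs3 : s^3 ≤ -s^3 := by linarith
  have hs3m : -1 ≤ s^3 := by
    nlinarith [mul_nonneg (by linarith : (0:ℝ) ≤ s+1)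
      (by nlinarith [sq_nonneg (2*s-1)] : (0:ℝ) ≤ s^2 - s + 1)]
  have hb1 : s^3 ≤ b := le_max_left _ _
  have hb2 : b ≤ -s^3 := max_le hs3 (min_le_right _ _)
  set a : E2 := EuclideanSpace.single 0 b + EuclideanSpace.single 1 s with ha
  have ha0 : a 0 = b := by simp [ha, EuclideanSpace.single_apply]
  have ha1 : a 1 = s := by simp [ha, EuclideanSpace.single_apply]
  have hamem : a ∈ idSetEx15 := by
    rw [mem_idSet, ha0, ha1]
    refine ⟨⟨by linarith, by linarith⟩, ⟨hs1, by linarith⟩, by linarith, by linarith, hs0⟩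
  have hd1 : |θ 1 - s| ≤ q := by
    rw [abs_of_nonneg (by linarith)]
    rcases le_total (θ 1) 0 with h | h
    · rw [hs, min_eq_left h]; linarith
    · rw [hs, min_eq_right h]; linarith
  have hd0 : |θ 0 - b| ≤ q := by
    rw [abs_le]
    constructor
    · rcases le_total (s^3) (min (θ 0) (-s^3)) with h | h
      · rw [hb, max_eq_right h]
        rcases le_total (θ 0) (-s^3) with h' | h'
        · rw [min_eq_left h']; linarith
        · rw [min_eq_right h']; linarith
      · rw [hb, max_eq_left h]; linarith
    · have : min (θ 0) (-s^3) ≤ b := le_max_right _ _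
      rcases le_total (θ 0) (-s^3) with h' | h'
      · rw [min_eq_left h'] at this; linarith
      · rw [min_eq_right h'] at this; linarith
  have hdist : dist θ a ≤ 2 * q := by
    rw [dist_eq_norm]
    have := E2norm_le (θ - a)
    have e0 : (θ - a) 0 = θ 0 - b := by simp [ha0]
    have e1 : (θ - a) 1 = θ 1 - s := by simp [ha1]
    rw [e0, e1] at this
    linarith
  have hfin : infDist θ idSetEx15 ≤ dist θ a := infDist_le_dist_of_mem hamem
  linarith

lemma tendsto_comp_proj {u : ℕ → E2} {x : E2} (i : Fin 2) (h : Tendsto u atTop (𝓝 x)) :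
    Tendsto (fun n => u n i) atTop (𝓝 (x i)) := by
  have := ((EuclideanSpace.proj i : E2 →L[ℝ] ℝ).continuous.tendsto x).comp h
  exact this

lemma tcone_eq : tcone idSetEx15 0 = {t : E2 | t 0 = 0 ∧ t 1 ≤ 0} := by
  ext t
  constructor
  · rintro (rfl | ⟨u, hu, hu0, hv⟩)
    · exact ⟨rfl, le_refl 0⟩
    · rcases eq_or_ne t 0 with rfl | htne
      · exact ⟨rfl, le_refl 0⟩
      simp only [sub_zero] at hv
      set w : E2 := ‖t‖⁻¹ • t with hw
      have key : ∀ n, u n 1 < 0 ∧ |u n 0| ≤ -(u n 1)^3 ∧ 0 < ‖u n‖ := by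
        intro n
        obtain ⟨hmem, hne⟩ := hu n
        obtain ⟨_, _, ha, hb, hc⟩ := mem_idSet.mp hmem
        have h1lt : u n 1 < 0 := by
          rcases hc.lt_or_eq with h | h
          · exact h
          · exfalso; apply hne; rw [h] at ha hb
            apply E2ext _ h
            · show u n 0 = 0; norm_num at ha hb; linarith
        refine ⟨h1lt, abs_le.mpr ⟨by linarith, by linarith⟩, ?_⟩
        calc (0:ℝ) < |u n 1| := by rw [abs_of_neg h1lt]; linarith
          _ ≤ ‖u n‖ := E2abs_le_norm _ _
      have hv1 : Tendsto (fun n => ‖u n‖⁻¹ * u n 1) atTop (𝓝 (w 1)) := by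
        have := tendsto_comp_proj 1 hv
        simpa [PiLp.smul_apply, smul_eq_mul] using this
      have hw1 : w 1 ≤ 0 := by
        apply le_of_tendsto hv1
        filter_upwards with n
        exact mul_nonpos_of_nonneg_of_nonpos (inv_nonneg.mpr (norm_nonneg _)) (key n).1.le
      have hbnd : ∀ n, |‖u n‖⁻¹ * u n 0| ≤ (u n 1)^2 := by
        intro n
        obtain ⟨h1, h2, h3⟩ := key n
        have hub : |u n 0| ≤ (u n 1)^2 * ‖u n‖ := by
          have : -(u n 1) ≤ ‖u n‖ := by
            have := E2abs_le_norm (u n) 1; rw [abs_of_neg h1] at this; exact this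
          calc |u n 0| ≤ -(u n 1)^3 := h2
            _ = (u n 1)^2 * (-(u n 1)) := by ring
            _ ≤ (u n 1)^2 * ‖u n‖ := by
                apply mul_le_mul_of_nonneg_left this (sq_nonneg _)
        calc |‖u n‖⁻¹ * u n 0| = ‖u n‖⁻¹ * |u n 0| := by
              rw [abs_mul, abs_of_nonneg (inv_nonneg.mpr (norm_nonneg _))]
          _ ≤ ‖u n‖⁻¹ * ((u n 1)^2 * ‖u n‖) :=
              mul_le_mul_of_nonneg_left hub (inv_nonneg.mpr (norm_nonneg _))
          _ = (u n 1)^2 := by field_simp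
      have hsq : Tendsto (fun n => (u n 1)^2) atTop (𝓝 0) := by
        have h1 : Tendsto (fun n => u n 1) atTop (𝓝 ((0:E2) 1)) := tendsto_comp_proj 1 hu0
        have h0 : ((0:E2) 1) = 0 := rfl
        rw [h0] at h1
        simpa using h1.pow 2
      have hv0 : Tendsto (fun n => ‖u n‖⁻¹ * u n 0) atTop (𝓝 (w 0)) := by
        have := tendsto_comp_proj 0 hv
        simpa [PiLp.smul_apply, smul_eq_mul] using this
      have hz : Tendsto (fun n => ‖u n‖⁻¹ * u n 0) atTop (𝓝 0) := by
        apply squeeze_zero_norm _ hsq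
        intro n
        rw [Real.norm_eq_abs]; exact hbnd n
      have hw0 : w 0 = 0 := tendsto_nhds_unique hv0 hz
      have hnorm : ‖t‖ ≠ 0 := norm_ne_zero_iff.mpr htne
      have hw0' : ‖t‖⁻¹ * t 0 = 0 := by
        have : w 0 = ‖t‖⁻¹ * t 0 := by simp [hw, PiLp.smul_apply]
        rw [← this]; exact hw0
      have hw1' : ‖t‖⁻¹ * t 1 ≤ 0 := by
        have : w 1 = ‖t‖⁻¹ * t 1 := by simp [hw, PiLp.smul_apply]
        rw [← this]; exact hw1
      constructor
      · rcases mul_eq_zero.mp hw0' with h | h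
        · exact absurd h (inv_ne_zero hnorm)
        · exact h
      · have hpos : 0 < ‖t‖⁻¹ := inv_pos.mpr ((norm_nonneg t).lt_of_ne' hnorm)
        nlinarith
  · rintro ⟨ht0, ht1⟩
    rcases ht1.lt_or_eq with hlt | heq
    case inr =>
      left
      exact E2ext ht0 heq
    case inl =>
      right
      set e : E2 := EuclideanSpace.single 1 1 with he
      set u : ℕ → E2 := fun n => EuclideanSpace.single 1 (-(1/(n+1) : ℝ)) with hudef
      have hun : ∀ n : ℕ, u n = (-(1/(n+1):ℝ)) • e := by
        intro n
        apply E2ext <;> simp [hudef, he, EuclideanSpace.single_apply, PiLp.smul_apply]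
      have hpos : ∀ n : ℕ, (0:ℝ) < 1/(n+1) := by
        intro n; positivity
      refine ⟨u, fun n => ⟨?_, ?_⟩, ?_, ?_⟩
      · rw [mem_idSet]
        have e0 : u n 0 = 0 := by rw [hudef]; simp [EuclideanSpace.single_apply]
        have e1 : u n 1 = -(1/(n+1):ℝ) := by rw [hudef]; simp [EuclideanSpace.single_apply]
        rw [e0, e1]
        have h1 : (1:ℝ)/(n+1) ≤ 1 := by
          rw [div_le_one (by positivity)]; norm_num
        have := hpos n
        have hc3 : (-(1/(n+1):ℝ))^3 = -((1/(n+1):ℝ)^3) := by ring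
        have hp3 : (0:ℝ) < (1/(n+1):ℝ)^3 := pow_pos (hpos n) 3
        refine ⟨by norm_num, ⟨by linarith, by linarith⟩, by rw [hc3]; linarith,
          by rw [hc3]; linarith, by linarith⟩
      · intro hcontra
        have : u n 1 = (0:E2) 1 := by rw [hcontra]
        rw [hudef] at this
        simp [EuclideanSpace.single_apply] at this
        have := hpos n; linarith
      · have hc : Tendsto (fun n : ℕ => -(1/(n+1) : ℝ)) atTop (𝓝 0) := by
          have h := (tendsto_one_div_add_atTop_nhds_zero_nat :
            Tendsto (fun n : ℕ => 1 / ((n:ℝ) + 1)) atTop (𝓝 0)).neg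
          rw [neg_zero] at h
          exact h
        have h2 := hc.smul_const e
        rw [zero_smul] at h2
        have huneq : u = fun n : ℕ => (-(1/(n+1):ℝ)) • e := funext hun
        rw [huneq]
        exact h2
      · have hnorm : ∀ n : ℕ, ‖u n‖ = 1/(n+1) := by
          intro n
          rw [hudef]
          show ‖EuclideanSpace.single (1 : Fin 2) (-(1/(n+1):ℝ))‖ = 1/(n+1)
          rw [EuclideanSpace.norm_single, Real.norm_eq_abs,
            abs_of_neg (by have := hpos n; linarith)]
          ring
        have hconst : ∀ n : ℕ, ‖u n - 0‖⁻¹ • (u n - 0) = (-1 : ℝ) • e := by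
          intro n
          rw [sub_zero, hnorm n, hun n, smul_smul]
          congr 1
          have := hpos n
          field_simp
        have htgt : ‖t‖⁻¹ • t = (-1 : ℝ) • e := by
          have hts : t = (t 1) • e := by
            apply E2ext
            · rw [ht0]; simp [he, EuclideanSpace.single_apply, PiLp.smul_apply]
            · simp [he, EuclideanSpace.single_apply, PiLp.smul_apply]
          have hnt : ‖t‖ = -(t 1) := by
            rw [hts, norm_smul, he, EuclideanSpace.norm_single]
            simp [Real.norm_eq_abs, abs_of_neg hlt]
          rw [hnt]
          nth_rewrite 2 [hts]
          rw [smul_smul]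
          congr 1
          rw [inv_eq_one_div, div_mul_eq_mul_div, one_mul,
            div_eq_iff (ne_of_gt (by linarith : (0:ℝ) < -t 1))]
          ring
        rw [htgt]
        have : (fun n : ℕ => ‖u n - 0‖⁻¹ • (u n - 0)) = fun _ : ℕ => (-1:ℝ) • e :=
          funext hconst
        rw [this]
        exact tendsto_const_nhds


/-- Second counterexample (right panel of Figure 1): the support set in direction
`p = (0,1)` is `{(0,0)}`, tangent and linearized cone agree and equal the downward ray,
Assumption 3′ holds at `(0,0)`, yet MFCQ fails at `(0,0)` (all three constraints are
active there and no direction makes all gradients strictly negative). -/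
theorem example15_assumption3'_without_MFCQ :
    suppSet idSetEx15 pvec = {0} ∧
    tcone idSetEx15 0 = {t : E2 | t 0 = 0 ∧ t 1 ≤ 0} ∧
    lcone gEx15 0 = {t : E2 | t 0 = 0 ∧ t 1 ≤ 0} ∧
    (∃ η > (0:ℝ), ∃ C > (0:ℝ), ∀ θ ∈ Box, ‖θ‖ ≤ η →
      Qcrit gEx15 θ ≥ C * infDist θ idSetEx15) ∧
    (∀ j : Fin 3, gEx15 j 0 = 0) ∧
    ¬ (∃ t : E2, ∀ j : Fin 3, ⟪gradient (gEx15 j) 0, t⟫ < 0) :=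
  ⟨suppSet_eq, tcone_eq, lcone_eq,
   ⟨1, one_pos, 1/2, by norm_num, assumption3'⟩,
   gEx15_zero, mfcq_fails⟩
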